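/- arXiv:2212.05084 — 3 statements merged into one kernel-verified Lean document; each statement's English description precedes it below -/
import Mathlib

section
/- Let B be a finite set of breaks, where each break b ∈ B is given as a closed real interval I_b = [s_b, e_b] with s_b ≤ e_b, let T be a finite set of real time points, and let Δ ≥ 1 be an integer. Suppose (ȳ, x̄) ∈ ℝ^B × ℝ satisfies ȳ_b ≥ 0 for all b ∈ B, 0 ≤ x̄ ≤ 1, Σ_{b ∈ B : t ∈ I_b} ȳ_b ≤ Δ·x̄ for all t ∈ T, and ȳ_b ≤ x̄ for all b ∈ B. Then (ȳ, x̄) lies in the convex hull of the set of binary vectors (y', x') ∈ {0,1}^B × {0,1} that satisfy Σ_{b ∈ B : t ∈ I_b} y'_b ≤ Δ·x' for all t ∈ T. -/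
open Finset


lemma sum01_int {B : Type*} (A : Finset B) (z : B → ℝ)
    (h : ∀ b ∈ A, z b = 0 ∨ z b = 1) :
    ∃ m : ℤ, ∑ b ∈ A, z b = (m : ℝ) := by
  classical
  induction A using Finset.induction_on with
  | empty => exact ⟨0, by simp⟩
  | @insert a A' ha ih =>
    obtain ⟨m, hm⟩ := ih (fun b hb => h b (mem_insert_of_mem hb))
    rcases h a (mem_insert_self a A') with h0 | h1
    · exact ⟨m, by rw [Finset.sum_insert ha, h0, hm]; ring⟩
    · exact ⟨m + 1, by rw [Finset.sum_insert ha, h1, hm]; push_cast; ring⟩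


lemma kernel_exists {R C : Type*} [DecidableEq R] [DecidableEq C] :
    ∀ (n : ℕ) (Rset : Finset R) (Cset : Finset C) (N : R → C → ℝ) (z : C → ℝ),
    Rset.card + Cset.card ≤ n →
    (∀ r ∈ Rset, ∀ c ∈ Cset, N r c = 0 ∨ N r c = 1 ∨ N r c = -1) →
    (∀ c ∈ Cset, ∀ r₁ ∈ Rset, ∀ r₂ ∈ Rset, N r₁ c = 1 → N r₂ c = 1 → r₁ = r₂) →
    (∀ c ∈ Cset, ∀ r₁ ∈ Rset, ∀ r₂ ∈ Rset, N r₁ c = -1 → N r₂ c = -1 → r₁ = r₂) →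
    (∀ r ∈ Rset, ∃ m : ℤ, ∑ c ∈ Cset, N r c * z c = (m : ℝ)) →
    (∀ c ∈ Cset, ∀ m : ℤ, z c ≠ (m : ℝ)) →
    Cset.Nonempty →
    ∃ d : C → ℝ, d ≠ 0 ∧ (∀ c, c ∉ Cset → d c = 0) ∧
      ∀ r ∈ Rset, ∑ c ∈ Cset, N r c * d c = 0 := by
  intro n
  induction n with
  | zero =>
    intro Rset Cset N z hcard _ _ _ _ _ hne
    have := Finset.card_pos.mpr hne; omega
  | succ n IH =>
    intro Rset Cset N z hcard hent hpos hneg hint hfrac hne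
    classical
    by_cases hzc : ∃ c ∈ Cset, ∀ r ∈ Rset, N r c = 0
    · obtain ⟨c₀, hc₀, hzero⟩ := hzc
      refine ⟨fun c => if c = c₀ then 1 else 0, ?_, ?_, ?_⟩
      · intro h
        have := congrFun h c₀
        simp at this
      · intro c hc
        simp only [ite_eq_right_iff]
        intro hcc; exact absurd (hcc ▸ hc₀) hc
      · intro r hr
        refine Finset.sum_eq_zero (fun c hc => ?_)
        by_cases h : c = c₀
        · rw [h, hzero r hr]; ring
      
        · simp [h]
    · push_neg at hzc
      by_cases hrow : ∃ r ∈ Rset, (Cset.filter (fun c => N r c ≠ 0)).card ≤ 2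
      · obtain ⟨r, hr, hK⟩ := hrow
        set K := Cset.filter (fun c => N r c ≠ 0) with hKdef
        have hK0 : K ⊆ Cset := Finset.filter_subset _ _
        have hcases : K.card = 0 ∨ K.card = 1 ∨ K.card = 2 := by omega
        rcases hcases with h0 | h1 | h2
        · -- row r is zero on Cset : drop the row
          have hzrow : ∀ c ∈ Cset, N r c = 0 := by
            intro c hc
            by_contra hcne
            have : c ∈ K := Finset.mem_filter.mpr ⟨hc, hcne⟩
            rw [Finset.card_eq_zero] at h0
            simp [h0] at this
          have hcard' : (Rset.erase r).card + Cset.card ≤ n := by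
            have := Finset.card_erase_of_mem hr
            have := Finset.card_pos.mpr ⟨r, hr⟩
            omega
          obtain ⟨d, hd0, hsupp, hrows⟩ := IH (Rset.erase r) Cset N z hcard'
            (fun r' hr' => hent r' (Finset.mem_of_mem_erase hr'))
            (fun c hc r₁ h₁ r₂ h₂ => hpos c hc r₁ (Finset.mem_of_mem_erase h₁) r₂ (Finset.mem_of_mem_erase h₂))
            (fun c hc r₁ h₁ r₂ h₂ => hneg c hc r₁ (Finset.mem_of_mem_erase h₁) r₂ (Finset.mem_of_mem_erase h₂))
            (fun r' hr' => hint r' (Finset.mem_of_mem_erase hr'))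
            hfrac hne
          refine ⟨d, hd0, hsupp, ?_⟩
          intro r' hr'
          by_cases hrr : r' = r
          · subst hrr
            exact Finset.sum_eq_zero (fun c hc => by rw [hzrow c hc]; ring)
          · exact hrows r' (Finset.mem_erase.mpr ⟨hrr, hr'⟩)
        · -- row r has exactly one nonzero entry: contradiction with fractionality
          exfalso
          obtain ⟨c₁, hc1⟩ := Finset.card_eq_one.mp h1
          have hc₁K : c₁ ∈ K := by rw [hc1]; exact Finset.mem_singleton_self c₁
          have hc₁C : c₁ ∈ Cset := hK0 hc₁K
          have hc₁ne : N r c₁ ≠ 0 := (Finset.mem_filter.mp hc₁K).2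
          obtain ⟨m, hm⟩ := hint r hr
          have hsum : ∑ c ∈ Cset, N r c * z c = N r c₁ * z c₁ := by
            refine Finset.sum_eq_single_of_mem c₁ hc₁C (fun c hc hne2 => ?_)
            have : c ∉ K := by rw [hc1]; simp [hne2]
            have : N r c = 0 := by
              by_contra hcne
              exact this (Finset.mem_filter.mpr ⟨hc, hcne⟩)
            rw [this]; ring
          rcases hent r hr c₁ hc₁C with h | h | h
          · exact hc₁ne h
          · exact hfrac c₁ hc₁C m (by rw [hsum, h] at hm; linarith)
          · exact hfrac c₁ hc₁C (-m) (by rw [hsum, h] at hm; push_cast; linarith)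
        · -- row r has exactly two nonzero entries: merge the two columns
          obtain ⟨c₁, c₂, hc12, hK⟩ := Finset.card_eq_two.mp h2
          have hc₁K : c₁ ∈ K := by rw [hK]; simp
          have hc₂K : c₂ ∈ K := by rw [hK]; simp
          have hc₁C : c₁ ∈ Cset := (Finset.mem_filter.mp hc₁K).1
          have hc₂C : c₂ ∈ Cset := (Finset.mem_filter.mp hc₂K).1
          have hKzero : ∀ c ∈ Cset, c ≠ c₁ → c ≠ c₂ → N r c = 0 := by
            intro c hc h1 h2'
            by_contra hcne
            have : c ∈ K := Finset.mem_filter.mpr ⟨hc, hcne⟩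
            rw [hK] at this
            simp [h1, h2'] at this
          set σ₁ := N r c₁ with hσ₁def
          set σ₂ := N r c₂ with hσ₂def
          have hσ₁v : σ₁ = 1 ∨ σ₁ = -1 := by
            rcases hent r hr c₁ hc₁C with h | h | h
            · exact absurd h (Finset.mem_filter.mp hc₁K).2
            · exact Or.inl h
            · exact Or.inr h
          have hσ₂v : σ₂ = 1 ∨ σ₂ = -1 := by
            rcases hent r hr c₂ hc₂C with h | h | h
            · exact absurd h (Finset.mem_filter.mp hc₂K).2
            · exact Or.inl h
            · exact Or.inr h
          -- entries of the two columns away from row r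
          have hA : ∀ r' ∈ Rset, r' ≠ r → N r' c₁ = 0 ∨ N r' c₁ = -σ₁ := by
            intro r' hr' hrne
            rcases hent r' hr' c₁ hc₁C with h | h | h
            · exact Or.inl h
            · rcases hσ₁v with e | e
              · exact absurd (hpos c₁ hc₁C r' hr' r hr h e) hrne
              · right; rw [h, e]; try norm_num
            · rcases hσ₁v with e | e
              · right; rw [h, e]; try norm_num
              · exact absurd (hneg c₁ hc₁C r' hr' r hr h e) hrne
          have hB : ∀ r' ∈ Rset, r' ≠ r → N r' c₂ = 0 ∨ N r' c₂ = -σ₂ := by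
            intro r' hr' hrne
            rcases hent r' hr' c₂ hc₂C with h | h | h
            · exact Or.inl h
            · rcases hσ₂v with e | e
              · exact absurd (hpos c₂ hc₂C r' hr' r hr h e) hrne
              · right; rw [h, e]; try norm_num
            · rcases hσ₂v with e | e
              · right; rw [h, e]; try norm_num
              · exact absurd (hneg c₂ hc₂C r' hr' r hr h e) hrne
          set N' : R → C → ℝ := fun r' c => if c = c₁ then N r' c₁ - σ₁ * σ₂ * N r' c₂ else N r' c with hN'def
          -- characterization of the merged column
          have hch : ∀ r' ∈ Rset, r' ≠ r →
              (N' r' c₁ = 0) ∨ (N' r' c₁ = -σ₁ ∧ N r' c₁ = -σ₁ ∧ N r' c₂ = 0)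
                ∨ (N' r' c₁ = σ₁ ∧ N r' c₁ = 0 ∧ N r' c₂ = -σ₂) := by
            intro r' hr' hrne
            have e1 : N' r' c₁ = N r' c₁ - σ₁ * σ₂ * N r' c₂ := by simp [hN'def]
            have hσ₂sq : σ₂ * σ₂ = 1 := by rcases hσ₂v with e | e <;> rw [e] <;> norm_num
            rcases hA r' hr' hrne with a | a <;> rcases hB r' hr' hrne with b | b
            · left; rw [e1, a, b]; ring
            · right; right
              refine ⟨?_, a, b⟩
              rw [e1, a, b]; linear_combination σ₁ * hσ₂sq
            · right; left
              refine ⟨?_, a, b⟩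
              rw [e1, a, b]; ring
            · left; rw [e1, a, b]; linear_combination σ₁ * hσ₂sq
          have hc₁' : c₁ ∈ Cset.erase c₂ := Finset.mem_erase.mpr ⟨hc12, hc₁C⟩
          -- hypotheses for the recursive call
          have hcard' : (Rset.erase r).card + (Cset.erase c₂).card ≤ n := by
            have := Finset.card_erase_of_mem hr
            have := Finset.card_erase_of_mem hc₂C
            have := Finset.card_pos.mpr ⟨r, hr⟩
            have := Finset.card_pos.mpr ⟨c₂, hc₂C⟩
            omega
          have hent' : ∀ r' ∈ Rset.erase r, ∀ c ∈ Cset.erase c₂, N' r' c = 0 ∨ N' r' c = 1 ∨ N' r' c = -1 := by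
            intro r' hr' c hc
            have hr'R := Finset.mem_of_mem_erase hr'
            have hrne := Finset.ne_of_mem_erase hr'
            by_cases hcc : c = c₁
            · subst hcc
              rcases hch r' hr'R hrne with h | ⟨h, _, _⟩ | ⟨h, _, _⟩
              · exact Or.inl h
              · rcases hσ₁v with e | e
                · right; right; rw [h, e]
                · right; left; rw [h, e]; norm_num
              · rcases hσ₁v with e | e
                · right; left; rw [h, e]
                · right; right; rw [h, e]
            · have : N' r' c = N r' c := by simp [hN'def, hcc]
              rw [this]
              exact hent r' hr'R c (Finset.mem_of_mem_erase hc)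
          have hposneg' : ∀ (sg : ℝ), (sg = 1 ∨ sg = -1) →
              ∀ c ∈ Cset.erase c₂, ∀ r₁ ∈ Rset.erase r, ∀ r₂ ∈ Rset.erase r,
                N' r₁ c = sg → N' r₂ c = sg → r₁ = r₂ := by
            intro sg hsg c hc r₁ h₁ r₂ h₂ e₁ e₂
            have h₁R := Finset.mem_of_mem_erase h₁
            have h₂R := Finset.mem_of_mem_erase h₂
            have h₁ne := Finset.ne_of_mem_erase h₁
            have h₂ne := Finset.ne_of_mem_erase h₂
            have hsgne : sg ≠ 0 := by rcases hsg with e | e <;> rw [e] <;> norm_num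
            by_cases hcc : c = c₁
            · rw [hcc] at e₁ e₂
              have src : ∀ r' ∈ Rset, r' ≠ r → N' r' c₁ = sg →
                  (sg = -σ₁ ∧ N r' c₁ = -σ₁ ∧ N r' c₂ = 0) ∨ (sg = σ₁ ∧ N r' c₁ = 0 ∧ N r' c₂ = -σ₂) := by
                intro r' hr'R hrne' he
                rcases hch r' hr'R hrne' with g | ⟨g, ga, gb⟩ | ⟨g, ga, gb⟩
                · exact absurd (he.symm.trans g) hsgne
                · exact Or.inl ⟨by rw [← he, g], ga, gb⟩
                · exact Or.inr ⟨by rw [← he, g], ga, gb⟩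
              rcases src r₁ h₁R h₁ne e₁ with ⟨s1, a1, b1⟩ | ⟨s1, a1, b1⟩ <;>
                rcases src r₂ h₂R h₂ne e₂ with ⟨s2, a2, b2⟩ | ⟨s2, a2, b2⟩
              · rcases hσ₁v with e | e
                · exact hneg c₁ hc₁C r₁ h₁R r₂ h₂R (by rw [a1, e]; try norm_num) (by rw [a2, e]; try norm_num)
                · exact hpos c₁ hc₁C r₁ h₁R r₂ h₂R (by rw [a1, e]; try norm_num) (by rw [a2, e]; try norm_num)
              · exfalso; rcases hσ₁v with e | e <;> rw [e] at s1 s2 <;> linarith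
              · exfalso; rcases hσ₁v with e | e <;> rw [e] at s1 s2 <;> linarith
              · rcases hσ₂v with e | e
                · exact hneg c₂ hc₂C r₁ h₁R r₂ h₂R (by rw [b1, e]; try norm_num) (by rw [b2, e]; try norm_num)
                · exact hpos c₂ hc₂C r₁ h₁R r₂ h₂R (by rw [b1, e]; try norm_num) (by rw [b2, e]; try norm_num)
            · have q1 : N r₁ c = sg := by rw [← e₁]; simp [hN'def, hcc]
              have q2 : N r₂ c = sg := by rw [← e₂]; simp [hN'def, hcc]
              have hcC := Finset.mem_of_mem_erase hc
              rcases hsg with e | e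
              · exact hpos c hcC r₁ h₁R r₂ h₂R (e ▸ q1) (e ▸ q2)
              · exact hneg c hcC r₁ h₁R r₂ h₂R (e ▸ q1) (e ▸ q2)
          have hσ₂sq : σ₂ * σ₂ = 1 := by rcases hσ₂v with e | e <;> rw [e] <;> norm_num
          -- the sum over row r, for arbitrary coefficient functions
          have rowsum : ∀ f : C → ℝ, ∑ c ∈ Cset, N r c * f c = σ₁ * f c₁ + σ₂ * f c₂ := by
            intro f
            rw [show Cset = insert c₁ (insert c₂ (Cset \ {c₁, c₂})) from ?_]
            · rw [Finset.sum_insert, Finset.sum_insert]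
              · have : ∑ c ∈ Cset \ {c₁, c₂}, N r c * f c = 0 := by
                  refine Finset.sum_eq_zero (fun c hcm => ?_)
                  obtain ⟨hcC, hcn⟩ := Finset.mem_sdiff.mp hcm
                  simp only [Finset.mem_insert, Finset.mem_singleton] at hcn
                  push_neg at hcn
                  rw [hKzero c hcC hcn.1 hcn.2]; ring
                rw [this]; ring
              · intro hmem
                exact (Finset.mem_sdiff.mp hmem).2 (by simp)
              · intro hmem
                rcases Finset.mem_insert.mp hmem with h | h
                · exact hc12 h
                · exact (Finset.mem_sdiff.mp h).2 (by simp)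
            · ext c
              simp only [Finset.mem_insert, Finset.mem_sdiff, Finset.mem_singleton]
              constructor
              · intro hcC
                by_cases hx : c = c₁
                · exact Or.inl hx
                · by_cases hy : c = c₂
                  · exact Or.inr (Or.inl hy)
                  · exact Or.inr (Or.inr ⟨hcC, by push_neg; exact ⟨hx, hy⟩⟩)
              · rintro (h | h | h)
                · exact h ▸ hc₁C
                · exact h ▸ hc₂C
                · exact h.1
          obtain ⟨m₀, hm₀⟩ := hint r hr
          have hrowr : σ₁ * z c₁ + σ₂ * z c₂ = (m₀ : ℝ) := (rowsum z).symm.trans hm₀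
          -- expansion of sums over the merged matrix
          have expand : ∀ (r' : R) (f : C → ℝ), ∑ c ∈ Cset.erase c₂, N' r' c * f c
              = (∑ c ∈ Cset, N r' c * f c) - N r' c₂ * f c₂ - σ₁ * σ₂ * N r' c₂ * f c₁ := by
            intro r' f
            have hdiff : ∑ c ∈ Cset.erase c₂, (N' r' c * f c - N r' c * f c)
                = -(σ₁ * σ₂ * N r' c₂) * f c₁ := by
              rw [Finset.sum_eq_single_of_mem c₁ hc₁' ?_]
              · have : N' r' c₁ = N r' c₁ - σ₁ * σ₂ * N r' c₂ := by simp [hN'def]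
                rw [this]; ring
              · intro c hc hne'
                have : N' r' c = N r' c := by simp [hN'def, hne']
                rw [this]; ring
            have h1 : ∑ c ∈ Cset.erase c₂, (N' r' c * f c - N r' c * f c)
                = ∑ c ∈ Cset.erase c₂, N' r' c * f c - ∑ c ∈ Cset.erase c₂, N r' c * f c :=
              Finset.sum_sub_distrib _ _
            have h2 : ∑ c ∈ Cset.erase c₂, N r' c * f c
                = (∑ c ∈ Cset, N r' c * f c) - N r' c₂ * f c₂ :=
              Finset.sum_erase_eq_sub hc₂C
            rw [h1, h2] at hdiff
            linarith
          have hint' : ∀ r' ∈ Rset.erase r, ∃ m : ℤ, ∑ c ∈ Cset.erase c₂, N' r' c * z c = (m : ℝ) := by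
            intro r' hr'
            have hr'R := Finset.mem_of_mem_erase hr'
            have hrne := Finset.ne_of_mem_erase hr'
            obtain ⟨m, hm⟩ := hint r' hr'R
            rcases hB r' hr'R hrne with hb | hb
            · refine ⟨m, ?_⟩
              rw [expand r' z, hb, hm]; push_cast; ring
            · refine ⟨m + m₀, ?_⟩
              rw [expand r' z, hb]
              push_cast
              linear_combination hm + hrowr + σ₁ * z c₁ * hσ₂sq
          obtain ⟨d', hd'0, hd'supp, hd'rows⟩ := IH (Rset.erase r) (Cset.erase c₂) N' z hcard' hent'
            (hposneg' 1 (Or.inl rfl)) (hposneg' (-1) (Or.inr rfl)) hint'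
            (fun c hc => hfrac c (Finset.mem_of_mem_erase hc)) ⟨c₁, hc₁'⟩
          set d : C → ℝ := fun c => if c = c₂ then -(σ₁ * σ₂) * d' c₁ else d' c with hddef
          obtain ⟨c₀, hc₀ne⟩ := Function.ne_iff.mp hd'0
          have hc₀mem : c₀ ∈ Cset.erase c₂ := by
            by_contra h
            exact hc₀ne (hd'supp c₀ h)
          have hc₀c₂ : c₀ ≠ c₂ := Finset.ne_of_mem_erase hc₀mem
          refine ⟨d, ?_, ?_, ?_⟩
          · intro h
            have h0 := congrFun h c₀
            simp only [hddef, if_neg hc₀c₂, Pi.zero_apply] at h0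
            exact hc₀ne h0
          · intro c hc
            have hcc₂ : c ≠ c₂ := fun h => hc (h ▸ hc₂C)
            have : c ∉ Cset.erase c₂ := fun h => hc (Finset.mem_of_mem_erase h)
            simp only [hddef, if_neg hcc₂]
            exact hd'supp c this
          · intro r' hr'R'
            by_cases hrr : r' = r
            · subst hrr
              rw [rowsum d]
              have e5 : d c₂ = -(σ₁ * σ₂) * d' c₁ := by simp [hddef]
              have e6 : d c₁ = d' c₁ := by simp [hddef, hc12]
              rw [e5, e6]
              linear_combination (-(σ₁ * d' c₁)) * hσ₂sq
            · have hr'e : r' ∈ Rset.erase r := Finset.mem_erase.mpr ⟨hrr, hr'R'⟩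
              have h0 := hd'rows r' hr'e
              have e2 := expand r' d'
              have e1 : ∑ c ∈ Cset.erase c₂, N r' c * d c = ∑ c ∈ Cset.erase c₂, N r' c * d' c :=
                Finset.sum_congr rfl (fun c hc => by
                  simp only [hddef, if_neg (Finset.ne_of_mem_erase hc)])
              have e3 : ∑ c ∈ Cset, N r' c * d c
                  = ∑ c ∈ Cset.erase c₂, N r' c * d c + N r' c₂ * d c₂ :=
                (Finset.sum_erase_add _ _ hc₂C).symm
              have e4 : ∑ c ∈ Cset, N r' c * d' c
                  = ∑ c ∈ Cset.erase c₂, N r' c * d' c + N r' c₂ * d' c₂ :=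
                (Finset.sum_erase_add _ _ hc₂C).symm
              have e5 : d c₂ = -(σ₁ * σ₂) * d' c₁ := by simp [hddef]
              rw [e3, e1, e5]
              linear_combination h0 - e2 - e4

      · -- every row has at least three nonzero entries: dimension count
        push_neg at hrow
        have hrow3 : ∀ r ∈ Rset, 3 ≤ (Cset.filter (fun c => N r c ≠ 0)).card := by
          intro r hr; have := hrow r hr; omega
        -- column degrees are at most 2
        have hcol : ∀ c ∈ Cset, (Rset.filter (fun r => N r c ≠ 0)).card ≤ 2 := by
          intro c hc
          have : (Rset.filter (fun r => N r c ≠ 0)).card ≤ ({1, -1} : Finset ℝ).card := by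
            refine Finset.card_le_card_of_injOn (fun r => N r c) ?_ ?_
            · intro r hrm
              obtain ⟨hrR, hrne⟩ := Finset.mem_filter.mp hrm
              rcases hent r hrR c hc with h | h | h
              · exact absurd h hrne
              · simp [h]
              · simp [h]
            · intro r₁ h₁ r₂ h₂ heq
              obtain ⟨h₁R, h₁ne⟩ := Finset.mem_filter.mp (h₁ : r₁ ∈ _)
              obtain ⟨h₂R, h₂ne⟩ := Finset.mem_filter.mp (h₂ : r₂ ∈ _)
              rcases hent r₁ h₁R c hc with e | e | e
              · exact absurd e h₁ne
              · exact hpos c hc r₁ h₁R r₂ h₂R e (by simp only [] at heq; rw [← heq]; exact e)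
              · exact hneg c hc r₁ h₁R r₂ h₂R e (by simp only [] at heq; rw [← heq]; exact e)
          have h2 : ({1, -1} : Finset ℝ).card = 2 := by
            rw [Finset.card_insert_of_notMem (by norm_num), Finset.card_singleton]
          omega
        -- double counting:  3 |Rset| ≤ 2 |Cset|
        have hcount : 3 * Rset.card ≤ 2 * Cset.card := by
          have key : ∑ r ∈ Rset, (Cset.filter (fun c => N r c ≠ 0)).card
              = ∑ c ∈ Cset, (Rset.filter (fun r => N r c ≠ 0)).card := by
            simp only [Finset.card_filter]
            rw [Finset.sum_comm]
          calc 3 * Rset.card = ∑ _r ∈ Rset, 3 := by rw [Finset.sum_const, smul_eq_mul, mul_comm]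
            _ ≤ ∑ r ∈ Rset, (Cset.filter (fun c => N r c ≠ 0)).card := Finset.sum_le_sum hrow
            _ = ∑ c ∈ Cset, (Rset.filter (fun r => N r c ≠ 0)).card := key
            _ ≤ ∑ _c ∈ Cset, 2 := Finset.sum_le_sum hcol
            _ = 2 * Cset.card := by rw [Finset.sum_const, smul_eq_mul, mul_comm]
        have hlt : Rset.card < Cset.card := by
          have := Finset.card_pos.mpr hne
          omega
        -- dimension count gives a kernel vector
        let Φ : (↥Cset → ℝ) →ₗ[ℝ] (↥Rset → ℝ) :=
          { toFun := fun w r => ∑ c ∈ Cset.attach, N r.1 c.1 * w c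
            map_add' := by
              intro w₁ w₂
              funext r
              simp [mul_add, Finset.sum_add_distrib]
            map_smul' := by
              intro a w
              funext r
              simp [Finset.mul_sum]
              ring_nf
              exact Finset.sum_congr rfl (fun c _ => by ring) }
        have hnotinj : ¬ Function.Injective Φ := by
          intro hinj
          have := LinearMap.finrank_le_finrank_of_injective hinj
          rw [Module.finrank_pi ℝ, Module.finrank_pi ℝ] at this
          simp [Fintype.card_coe] at this
          omega
        have hker : ∃ w : ↥Cset → ℝ, w ≠ 0 ∧ Φ w = 0 := by
          by_contra hcon
          push_neg at hcon
          apply hnotinj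
          rw [← LinearMap.ker_eq_bot, Submodule.eq_bot_iff]
          intro w hw
          by_contra hwne
          exact absurd (LinearMap.mem_ker.mp hw) (hcon w hwne)
        obtain ⟨w, hwne, hw0⟩ := hker
        refine ⟨fun c => if h : c ∈ Cset then w ⟨c, h⟩ else 0, ?_, ?_, ?_⟩
        · intro h
          apply hwne
          funext c
          have := congrFun h c.1
          simpa [c.2] using this
        · intro c hc
          simp [hc]
        · intro r hrR
          have h1 : ∑ c ∈ Cset, (N r c * if h : c ∈ Cset then w ⟨c, h⟩ else 0)
              = ∑ c ∈ Cset.attach, N r c.1 * w c := by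
            rw [← Finset.sum_attach Cset (fun c => N r c * if h : c ∈ Cset then w ⟨c, h⟩ else 0)]
            exact Finset.sum_congr rfl (fun c _ => by simp [c.2])
          rw [h1]
          exact congrFun hw0 ⟨r, hrR⟩


lemma exists_direction {B : Type*} [Fintype B] [DecidableEq B] (s e : B → ℝ)
    (T' : Finset ℝ) (F : Finset B) (hF : F.Nonempty) (z : B → ℝ)
    (hfrac : ∀ b ∈ F, ∀ m : ℤ, z b ≠ (m : ℝ))
    (htight : ∀ t ∈ T', ∃ m : ℤ,
      ∑ b ∈ F.filter (fun b => s b ≤ t ∧ t ≤ e b), z b = (m : ℝ)) :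
    ∃ d : B → ℝ, d ≠ 0 ∧ (∀ b, b ∉ F → d b = 0) ∧
      ∀ t ∈ T', ∑ b ∈ F.filter (fun b => s b ≤ t ∧ t ≤ e b), d b = 0 := by
  classical
  set ind : ℝ → B → ℝ := fun t b => if s b ≤ t ∧ t ≤ e b then 1 else 0 with hind
  set nxt : ℝ → Finset ℝ := fun t => T'.filter (fun u => t < u) with hnxt
  set N : ℝ → B → ℝ := fun t b =>
    (if h : (nxt t).Nonempty then ind ((nxt t).min' h) b else 0) - ind t b with hN
  have hind01 : ∀ u b, ind u b = 0 ∨ ind u b = 1 := by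
    intro u b
    simp only [hind]
    split <;> simp
  -- generic sums
  have hsum : ∀ (u : ℝ) (f : B → ℝ), ∑ b ∈ F, ind u b * f b
      = ∑ b ∈ F.filter (fun b => s b ≤ u ∧ u ≤ e b), f b := by
    intro u f
    rw [Finset.sum_filter]
    refine Finset.sum_congr rfl (fun b _ => ?_)
    simp only [hind]
    split <;> simp
  have hminmem : ∀ (t : ℝ) (h : (nxt t).Nonempty),
      (nxt t).min' h ∈ T' ∧ t < (nxt t).min' h := by
    intro t h
    have h2 : (nxt t).min' h ∈ T'.filter (fun u => t < u) := (nxt t).min'_mem h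
    exact ⟨(Finset.mem_filter.mp h2).1, (Finset.mem_filter.mp h2).2⟩
  have hminle : ∀ (t u : ℝ), u ∈ T' → t < u →
      ∃ h : (nxt t).Nonempty, (nxt t).min' h ≤ u := by
    intro t u hu htu
    have humem : u ∈ nxt t := by rw [hnxt]; exact Finset.mem_filter.mpr ⟨hu, htu⟩
    exact ⟨⟨u, humem⟩, Finset.min'_le _ u humem⟩
  -- characterization of entries 1 and -1
  have hplus : ∀ t b, N t b = 1 →
      ∃ h : (nxt t).Nonempty, ind ((nxt t).min' h) b = 1 ∧ ind t b = 0 := by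
    intro t b h1
    simp only [hN] at h1
    by_cases h : (nxt t).Nonempty
    · rw [dif_pos h] at h1
      refine ⟨h, ?_⟩
      rcases hind01 ((nxt t).min' h) b with e1 | e1 <;> rcases hind01 t b with e2 | e2 <;>
        rw [e1, e2] at h1 <;> first | (exact ⟨e1, e2⟩) | linarith
    · rw [dif_neg h] at h1
      rcases hind01 t b with e2 | e2 <;> rw [e2] at h1 <;> linarith
  have hminus : ∀ t b, N t b = -1 →
      ind t b = 1 ∧ ∀ h : (nxt t).Nonempty, ind ((nxt t).min' h) b = 0 := by
    intro t b h1
    simp only [hN] at h1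
    by_cases h : (nxt t).Nonempty
    · rw [dif_pos h] at h1
      rcases hind01 ((nxt t).min' h) b with e1 | e1 <;> rcases hind01 t b with e2 | e2 <;>
        rw [e1, e2] at h1 <;>
        first | (exact ⟨e2, fun _ => e1⟩) | linarith
    · rw [dif_neg h] at h1
      rcases hind01 t b with e2 | e2 <;> rw [e2] at h1
      · linarith
      · exact ⟨e2, fun hh => absurd hh h⟩
  have hindI : ∀ u b, ind u b = 1 → s b ≤ u ∧ u ≤ e b := by
    intro u b h
    simp only [hind] at h
    by_contra hc
    rw [if_neg hc] at h
    linarith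
  have hindO : ∀ u b, ind u b = 0 → ¬(s b ≤ u ∧ u ≤ e b) := by
    intro u b h hc
    simp only [hind, if_pos hc] at h
    linarith
  -- apply the kernel lemma
  have hent : ∀ t ∈ T', ∀ b ∈ F, N t b = 0 ∨ N t b = 1 ∨ N t b = -1 := by
    intro t _ b _
    simp only [hN]
    by_cases h : (nxt t).Nonempty
    · rw [dif_pos h]
      rcases hind01 ((nxt t).min' h) b with e1 | e1 <;> rcases hind01 t b with e2 | e2 <;>
        rw [e1, e2] <;> norm_num
    · rw [dif_neg h]
      rcases hind01 t b with e2 | e2 <;> rw [e2] <;> norm_num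
  have hpos : ∀ b ∈ F, ∀ t₁ ∈ T', ∀ t₂ ∈ T', N t₁ b = 1 → N t₂ b = 1 → t₁ = t₂ := by
    have key : ∀ b, ∀ t₁ ∈ T', ∀ t₂ ∈ T', t₁ < t₂ → N t₁ b = 1 → N t₂ b = 1 → False := by
      intro b t₁ h₁ t₂ h₂ hlt e₁ e₂
      obtain ⟨hne₁, hm₁, hz₁⟩ := hplus t₁ b e₁
      obtain ⟨hne₂, hm₂, hz₂⟩ := hplus t₂ b e₂
      obtain ⟨hs₁, he₁⟩ := hindI _ _ hm₁
      obtain ⟨hs₂, he₂⟩ := hindI _ _ hm₂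
      obtain ⟨hne₁', hle⟩ := hminle t₁ t₂ h₂ hlt
      have hmle : (nxt t₁).min' hne₁ ≤ t₂ := hle
      have hnot := hindO _ _ hz₂
      have hsb : s b ≤ t₂ := le_trans hs₁ hmle
      have heb : e b < t₂ := by
        by_contra hh
        push_neg at hh
        exact hnot ⟨hsb, hh⟩
      have := (hminmem t₂ hne₂).2
      linarith
    intro b _ t₁ h₁ t₂ h₂ e₁ e₂
    rcases lt_trichotomy t₁ t₂ with h | h | h
    · exact absurd (key b t₁ h₁ t₂ h₂ h e₁ e₂) (fun x => x)
    · exact h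
    · exact absurd (key b t₂ h₂ t₁ h₁ h e₂ e₁) (fun x => x)
  have hneg : ∀ b ∈ F, ∀ t₁ ∈ T', ∀ t₂ ∈ T', N t₁ b = -1 → N t₂ b = -1 → t₁ = t₂ := by
    have key : ∀ b, ∀ t₁ ∈ T', ∀ t₂ ∈ T', t₁ < t₂ → N t₁ b = -1 → N t₂ b = -1 → False := by
      intro b t₁ h₁ t₂ h₂ hlt e₁ e₂
      obtain ⟨hi₁, hz₁⟩ := hminus t₁ b e₁
      obtain ⟨hi₂, _⟩ := hminus t₂ b e₂
      obtain ⟨hs₁, he₁⟩ := hindI _ _ hi₁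
      obtain ⟨hs₂, he₂⟩ := hindI _ _ hi₂
      obtain ⟨hne₁, hle⟩ := hminle t₁ t₂ h₂ hlt
      have hz := hz₁ hne₁
      have hnot := hindO _ _ hz
      have hlt₁ := (hminmem t₁ hne₁).2
      have hsb : s b ≤ (nxt t₁).min' hne₁ := le_trans hs₁ (le_of_lt hlt₁)
      have heb : e b < (nxt t₁).min' hne₁ := by
        by_contra hh
        push_neg at hh
        exact hnot ⟨hsb, hh⟩
      linarith
    intro b _ t₁ h₁ t₂ h₂ e₁ e₂
    rcases lt_trichotomy t₁ t₂ with h | h | h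
    · exact absurd (key b t₁ h₁ t₂ h₂ h e₁ e₂) (fun x => x)
    · exact h
    · exact absurd (key b t₂ h₂ t₁ h₁ h e₂ e₁) (fun x => x)
  have hint : ∀ t ∈ T', ∃ m : ℤ, ∑ b ∈ F, N t b * z b = (m : ℝ) := by
    intro t ht
    have hexp : ∀ u, ∑ b ∈ F, (ind u b) * z b
        = ∑ b ∈ F.filter (fun b => s b ≤ u ∧ u ≤ e b), z b := fun u => hsum u z
    by_cases h : (nxt t).Nonempty
    · obtain ⟨m₁, hm₁⟩ := htight ((nxt t).min' h) (hminmem t h).1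
      obtain ⟨m₂, hm₂⟩ := htight t ht
      refine ⟨m₁ - m₂, ?_⟩
      have : ∑ b ∈ F, N t b * z b
          = ∑ b ∈ F, ind ((nxt t).min' h) b * z b - ∑ b ∈ F, ind t b * z b := by
        rw [← Finset.sum_sub_distrib]
        refine Finset.sum_congr rfl (fun b _ => ?_)
        simp only [hN, dif_pos h]
        ring
      rw [this, hexp, hexp, hm₁, hm₂]
      push_cast
      ring
    · obtain ⟨m₂, hm₂⟩ := htight t ht
      refine ⟨-m₂, ?_⟩
      have : ∑ b ∈ F, N t b * z b = - ∑ b ∈ F, ind t b * z b := by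
        rw [← Finset.sum_neg_distrib]
        refine Finset.sum_congr rfl (fun b _ => ?_)
        simp only [hN, dif_neg h]
        ring
      rw [this, hexp, hm₂]
      push_cast
      ring
  obtain ⟨d, hd0, hsupp, hrows⟩ := kernel_exists (T'.card + F.card) T' F N z le_rfl
    hent hpos hneg hint hfrac hF
  -- recover the vanishing of all tight cuts by downward induction
  refine ⟨d, hd0, hsupp, ?_⟩
  have main : ∀ k : ℕ, ∀ t ∈ T', (nxt t).card = k →
      ∑ b ∈ F.filter (fun b => s b ≤ t ∧ t ≤ e b), d b = 0 := by
    intro k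
    induction k using Nat.strong_induction_on with
    | _ k IH =>
      intro t ht hk
      have hrow := hrows t ht
      by_cases h : (nxt t).Nonempty
      · have hmem := (hminmem t h).1
        have hlt := (hminmem t h).2
        have hcard : (nxt ((nxt t).min' h)).card < k := by
          rw [← hk]
          refine Finset.card_lt_card ?_
          rw [Finset.ssubset_iff_of_subset ?_]
          · refine ⟨(nxt t).min' h, (nxt t).min'_mem h, ?_⟩
            intro hbad
            have h3 : (nxt t).min' h ∈ T'.filter (fun u => (nxt t).min' h < u) := hbad
            exact absurd (Finset.mem_filter.mp h3).2 (lt_irrefl _)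
          · intro u hu
            have hu' : u ∈ T'.filter (fun v => (nxt t).min' h < v) := hu
            obtain ⟨huT, hultg⟩ := Finset.mem_filter.mp hu'
            show u ∈ T'.filter (fun v => t < v)
            exact Finset.mem_filter.mpr ⟨huT, lt_trans hlt hultg⟩
        have hIH := IH _ hcard ((nxt t).min' h) hmem rfl
        have : ∑ b ∈ F, N t b * d b
            = ∑ b ∈ F, ind ((nxt t).min' h) b * d b - ∑ b ∈ F, ind t b * d b := by
          rw [← Finset.sum_sub_distrib]
          refine Finset.sum_congr rfl (fun b _ => ?_)
          simp only [hN, dif_pos h]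
          ring
        rw [this, hsum, hsum, hIH] at hrow
        linarith
      · have : ∑ b ∈ F, N t b * d b = - ∑ b ∈ F, ind t b * d b := by
          rw [← Finset.sum_neg_distrib]
          refine Finset.sum_congr rfl (fun b _ => ?_)
          simp only [hN, dif_neg h]
          ring
        rw [this, hsum] at hrow
        linarith
  intro t ht
  exact main (nxt t).card t ht rfl

lemma core {B : Type*} [Fintype B] [DecidableEq B] (s e : B → ℝ) (T : Finset ℝ) (Δ : ℤ) :
    ∀ (n : ℕ) (z : B → ℝ),
    (univ.filter (fun b => z b ≠ 0 ∧ z b ≠ 1)).card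
      + (T.filter (fun t => ∑ b ∈ univ.filter (fun b => s b ≤ t ∧ t ≤ e b), z b < (Δ:ℝ))).card ≤ n →
    (∀ b, 0 ≤ z b) → (∀ b, z b ≤ 1) →
    (∀ t ∈ T, ∑ b ∈ univ.filter (fun b => s b ≤ t ∧ t ≤ e b), z b ≤ (Δ:ℝ)) →
    z ∈ convexHull ℝ {w : B → ℝ | (∀ b, w b = 0 ∨ w b = 1) ∧
        ∀ t ∈ T, ∑ b ∈ univ.filter (fun b => s b ≤ t ∧ t ≤ e b), w b ≤ (Δ:ℝ)} := by
  intro n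
  induction n with
  | zero =>
    intro z hm h0 h1 hcap
    refine subset_convexHull ℝ _ ⟨fun b => ?_, hcap⟩
    by_contra hb
    push_neg at hb
    have : b ∈ univ.filter (fun b => z b ≠ 0 ∧ z b ≠ 1) :=
      Finset.mem_filter.mpr ⟨Finset.mem_univ b, hb⟩
    have := Finset.card_pos.mpr ⟨b, this⟩
    omega
  | succ n IH =>
    intro z hm h0 h1 hcap
    set F := univ.filter (fun b => z b ≠ 0 ∧ z b ≠ 1) with hF
    by_cases hFne : F.Nonempty
    · -- there is a fractional coordinate
      set St : ℝ → Finset B := fun t => univ.filter (fun b => s b ≤ t ∧ t ≤ e b) with hSt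
      have hmSt : F.card + (T.filter (fun t => ∑ b ∈ St t, z b < (Δ:ℝ))).card ≤ n + 1 := hm
      have hmemF : ∀ b, b ∈ F ↔ (z b ≠ 0 ∧ z b ≠ 1) := by
        intro b; rw [hF, Finset.mem_filter]; simp
      have hfrac : ∀ b ∈ F, ∀ m : ℤ, z b ≠ (m : ℝ) := by
        intro b hb m hzm
        have hb' := (hmemF b).mp hb
        have hm0 : (0:ℝ) ≤ (m:ℝ) := hzm ▸ h0 b
        have hm1 : (m:ℝ) ≤ 1 := hzm ▸ h1 b
        have : (0:ℤ) ≤ m := by exact_mod_cast hm0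
        have : m ≤ (1:ℤ) := by exact_mod_cast hm1
        interval_cases m
        · rw [hzm] at hb'; simp at hb'
        · rw [hzm] at hb'; simp at hb'
      have split : ∀ (t : ℝ) (f : B → ℝ), ∑ b ∈ St t, f b
          = ∑ b ∈ F.filter (fun b => s b ≤ t ∧ t ≤ e b), f b
            + ∑ b ∈ (St t).filter (fun b => b ∉ F), f b := by
        intro t f
        have hset : (St t).filter (fun b => b ∈ F) = F.filter (fun b => s b ≤ t ∧ t ≤ e b) := by
          ext b
          simp only [hSt, hF, Finset.mem_filter, Finset.mem_univ, true_and]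
          tauto
        rw [← Finset.sum_filter_add_sum_filter_not (St t) (fun b => b ∈ F) f, hset]
      have hint01 : ∀ (t : ℝ), ∃ m : ℤ, ∑ b ∈ (St t).filter (fun b => b ∉ F), z b = (m : ℝ) := by
        intro t
        refine sum01_int _ _ (fun b hb => ?_)
        have hbF := (Finset.mem_filter.mp hb).2
        have := (hmemF b).not.mp hbF
        push_neg at this
        by_cases h : z b = 0
        · exact Or.inl h
        · exact Or.inr (this h)
      have htight : ∀ t ∈ T.filter (fun t => ∑ b ∈ St t, z b = (Δ:ℝ)), ∃ m : ℤ,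
          ∑ b ∈ F.filter (fun b => s b ≤ t ∧ t ≤ e b), z b = (m : ℝ) := by
        intro t ht
        obtain ⟨htT, hteq⟩ := Finset.mem_filter.mp ht
        obtain ⟨m₁, hm₁⟩ := hint01 t
        refine ⟨Δ - m₁, ?_⟩
        have := split t z
        rw [hteq, hm₁] at this
        push_cast
        linarith
      obtain ⟨d, hd0, hsupp, hdtight⟩ := exists_direction s e
        (T.filter (fun t => ∑ b ∈ St t, z b = (Δ:ℝ))) F hFne z hfrac htight
      -- tight cuts of d vanish (over the full cut set)
      have hdcut : ∀ t ∈ T, (∑ b ∈ St t, z b = (Δ:ℝ)) → ∑ b ∈ St t, d b = 0 := by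
        intro t ht heq
        rw [split t d]
        rw [hdtight t (Finset.mem_filter.mpr ⟨ht, heq⟩)]
        have : ∑ b ∈ (St t).filter (fun b => b ∉ F), d b = 0 :=
          Finset.sum_eq_zero (fun b hb => hsupp b (Finset.mem_filter.mp hb).2)
        rw [this]; ring
      -- the step lemma
      have step : ∀ dd : B → ℝ, dd ≠ 0 → (∀ b, b ∉ F → dd b = 0) →
          (∀ t ∈ T, (∑ b ∈ St t, z b = (Δ:ℝ)) → ∑ b ∈ St t, dd b = 0) →
          ∃ ε : ℝ, 0 < ε ∧ (∀ b, 0 ≤ z b + ε * dd b) ∧ (∀ b, z b + ε * dd b ≤ 1) ∧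
            (∀ t ∈ T, ∑ b ∈ St t, (z b + ε * dd b) ≤ (Δ:ℝ)) ∧
            (univ.filter (fun b => z b + ε * dd b ≠ 0 ∧ z b + ε * dd b ≠ 1)).card
              + (T.filter (fun t => ∑ b ∈ St t, (z b + ε * dd b) < (Δ:ℝ))).card
              < F.card + (T.filter (fun t => ∑ b ∈ St t, z b < (Δ:ℝ))).card := by
        intro dd hdd0 hddsupp hddtight
        have hzpos : ∀ b ∈ F, 0 < z b ∧ z b < 1 := by
          intro b hb
          obtain ⟨hz0, hz1⟩ := (hmemF b).mp hb
          exact ⟨lt_of_le_of_ne (h0 b) (Ne.symm hz0), lt_of_le_of_ne (h1 b) hz1⟩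
        set cands : Finset ℝ :=
          ((F.filter (fun b => 0 < dd b)).image (fun b => (1 - z b) / dd b)) ∪
          ((F.filter (fun b => dd b < 0)).image (fun b => z b / (- dd b))) ∪
          ((T.filter (fun t => (∑ b ∈ St t, z b < (Δ:ℝ)) ∧ 0 < ∑ b ∈ St t, dd b)).image
            (fun t => ((Δ:ℝ) - ∑ b ∈ St t, z b) / (∑ b ∈ St t, dd b))) with hcands
        have hcne : cands.Nonempty := by
          obtain ⟨b₀, hb₀⟩ := Function.ne_iff.mp hdd0
          have hb₀F : b₀ ∈ F := by
            by_contra h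
            exact hb₀ (hddsupp b₀ h)
          rcases lt_or_gt_of_ne hb₀ with h | h
          · refine ⟨z b₀ / (- dd b₀), ?_⟩
            rw [hcands]
            refine Finset.mem_union_left _ (Finset.mem_union_right _ ?_)
            exact Finset.mem_image.mpr ⟨b₀, Finset.mem_filter.mpr ⟨hb₀F, h⟩, rfl⟩
          · refine ⟨(1 - z b₀) / dd b₀, ?_⟩
            rw [hcands]
            refine Finset.mem_union_left _ (Finset.mem_union_left _ ?_)
            exact Finset.mem_image.mpr ⟨b₀, Finset.mem_filter.mpr ⟨hb₀F, h⟩, rfl⟩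
        have hcpos : ∀ x ∈ cands, 0 < x := by
          intro x hx
          rw [hcands] at hx
          rcases Finset.mem_union.mp hx with hx | hx
          · rcases Finset.mem_union.mp hx with hx | hx
            · obtain ⟨b, hb, rfl⟩ := Finset.mem_image.mp hx
              obtain ⟨hbF, hbd⟩ := Finset.mem_filter.mp hb
              exact div_pos (by linarith [(hzpos b hbF).2]) hbd
            · obtain ⟨b, hb, rfl⟩ := Finset.mem_image.mp hx
              obtain ⟨hbF, hbd⟩ := Finset.mem_filter.mp hb
              exact div_pos (hzpos b hbF).1 (by linarith)
          · obtain ⟨t, htm, rfl⟩ := Finset.mem_image.mp hx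
            obtain ⟨htT, hcond⟩ := Finset.mem_filter.mp htm
            exact div_pos (by linarith [hcond.1]) hcond.2
        set ε := cands.min' hcne with hε
        have hεpos : 0 < ε := hcpos _ (cands.min'_mem hcne)
        have hεle : ∀ x ∈ cands, ε ≤ x := fun x hx => Finset.min'_le _ x hx
        have hbound : ∀ b, (0 ≤ z b + ε * dd b) ∧ (z b + ε * dd b ≤ 1) := by
          intro b
          rcases lt_trichotomy (dd b) 0 with h | h | h
          · have hbF : b ∈ F := by
              by_contra hh
              rw [hddsupp b hh] at h
              exact lt_irrefl 0 h
            have hc : z b / (- dd b) ∈ cands := by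
              rw [hcands]
              refine Finset.mem_union_left _ (Finset.mem_union_right _ ?_)
              exact Finset.mem_image.mpr ⟨b, Finset.mem_filter.mpr ⟨hbF, h⟩, rfl⟩
            have := hεle _ hc
            have h2 : ε * (- dd b) ≤ z b := by
              rw [← le_div_iff₀ (by linarith : (0:ℝ) < - dd b)]
              exact this
            constructor
            · linarith
            · nlinarith [h1 b, hεpos]
          · rw [h]
            constructor <;> [simpa using h0 b; simpa using h1 b]
          · have hbF : b ∈ F := by
              by_contra hh
              rw [hddsupp b hh] at h
              exact lt_irrefl 0 h
            have hc : (1 - z b) / dd b ∈ cands := by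
              rw [hcands]
              refine Finset.mem_union_left _ (Finset.mem_union_left _ ?_)
              exact Finset.mem_image.mpr ⟨b, Finset.mem_filter.mpr ⟨hbF, h⟩, rfl⟩
            have := hεle _ hc
            have h2 : ε * dd b ≤ 1 - z b := by
              rw [← le_div_iff₀ h]
              exact this
            constructor
            · nlinarith [h0 b, hεpos]
            · linarith
        have hsums : ∀ t, ∑ b ∈ St t, (z b + ε * dd b)
            = ∑ b ∈ St t, z b + ε * ∑ b ∈ St t, dd b := by
          intro t
          rw [Finset.sum_add_distrib, Finset.mul_sum]
        have hcaps : ∀ t ∈ T, ∑ b ∈ St t, (z b + ε * dd b) ≤ (Δ:ℝ) := by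
          intro t ht
          rw [hsums]
          rcases le_or_gt (∑ b ∈ St t, dd b) 0 with h | h
          · nlinarith [hcap t ht, hεpos]
          · by_cases heq : ∑ b ∈ St t, z b = (Δ:ℝ)
            · rw [hddtight t ht heq] at h
              exact absurd h (lt_irrefl 0)
            · have hslack : ∑ b ∈ St t, z b < (Δ:ℝ) := lt_of_le_of_ne (hcap t ht) heq
              have hc : ((Δ:ℝ) - ∑ b ∈ St t, z b) / (∑ b ∈ St t, dd b) ∈ cands := by
                rw [hcands]
                refine Finset.mem_union_right _ ?_
                exact Finset.mem_image.mpr ⟨t, Finset.mem_filter.mpr ⟨ht, hslack, h⟩, rfl⟩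
              have := hεle _ hc
              have h2 : ε * (∑ b ∈ St t, dd b) ≤ (Δ:ℝ) - ∑ b ∈ St t, z b := by
                rw [← le_div_iff₀ h]
                exact this
              linarith
        -- the two monotonicity inclusions
        have hFsub : (univ.filter (fun b => z b + ε * dd b ≠ 0 ∧ z b + ε * dd b ≠ 1)) ⊆ F := by
          intro b hb
          by_contra hbF
          have hd0' : dd b = 0 := hddsupp b hbF
          obtain ⟨_, hb2⟩ := Finset.mem_filter.mp hb
          rw [hd0'] at hb2
          simp only [mul_zero, add_zero] at hb2
          exact hbF ((hmemF b).mpr hb2)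
        have hSsub : (T.filter (fun t => ∑ b ∈ St t, (z b + ε * dd b) < (Δ:ℝ)))
            ⊆ (T.filter (fun t => ∑ b ∈ St t, z b < (Δ:ℝ))) := by
          intro t ht
          obtain ⟨htT, htlt⟩ := Finset.mem_filter.mp ht
          refine Finset.mem_filter.mpr ⟨htT, ?_⟩
          by_contra hh
          push_neg at hh
          have heq : ∑ b ∈ St t, z b = (Δ:ℝ) := le_antisymm (hcap t htT) hh
          rw [hsums, hddtight t htT heq, heq] at htlt
          simp at htlt
        -- strict decrease
        have hstrict : (univ.filter (fun b => z b + ε * dd b ≠ 0 ∧ z b + ε * dd b ≠ 1)).card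
              + (T.filter (fun t => ∑ b ∈ St t, (z b + ε * dd b) < (Δ:ℝ))).card
              < F.card + (T.filter (fun t => ∑ b ∈ St t, z b < (Δ:ℝ))).card := by
          have hc1 := Finset.card_le_card hFsub
          have hc2 := Finset.card_le_card hSsub
          have hεmem : ε ∈ ((F.filter (fun b => 0 < dd b)).image (fun b => (1 - z b) / dd b)) ∪
              ((F.filter (fun b => dd b < 0)).image (fun b => z b / (- dd b))) ∪
              ((T.filter (fun t => (∑ b ∈ St t, z b < (Δ:ℝ)) ∧ 0 < ∑ b ∈ St t, dd b)).image
                (fun t => ((Δ:ℝ) - ∑ b ∈ St t, z b) / (∑ b ∈ St t, dd b))) :=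
            cands.min'_mem hcne
          rcases Finset.mem_union.mp hεmem with hx | hx
          · rcases Finset.mem_union.mp hx with hx | hx
            · -- some b with dd b > 0 reaches 1
              obtain ⟨b, hb, hbeq⟩ := Finset.mem_image.mp hx
              obtain ⟨hbF, hbd⟩ := Finset.mem_filter.mp hb
              have hne' : dd b ≠ 0 := ne_of_gt hbd
              have : z b + ε * dd b = 1 := by
                rw [← hbeq]
                field_simp
                ring
              have hnotmem : b ∉ univ.filter (fun b => z b + ε * dd b ≠ 0 ∧ z b + ε * dd b ≠ 1) := by
                intro hmem
                exact (Finset.mem_filter.mp hmem).2.2 this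
              have : (univ.filter (fun b => z b + ε * dd b ≠ 0 ∧ z b + ε * dd b ≠ 1)).card < F.card :=
                Finset.card_lt_card ((Finset.ssubset_iff_of_subset hFsub).mpr ⟨b, hbF, hnotmem⟩)
              omega
            · obtain ⟨b, hb, hbeq⟩ := Finset.mem_image.mp hx
              obtain ⟨hbF, hbd⟩ := Finset.mem_filter.mp hb
              have hne' : dd b ≠ 0 := ne_of_lt hbd
              have : z b + ε * dd b = 0 := by
                rw [← hbeq, div_neg]
                field_simp
                ring
              have hnotmem : b ∉ univ.filter (fun b => z b + ε * dd b ≠ 0 ∧ z b + ε * dd b ≠ 1) := by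
                intro hmem
                exact (Finset.mem_filter.mp hmem).2.1 this
              have : (univ.filter (fun b => z b + ε * dd b ≠ 0 ∧ z b + ε * dd b ≠ 1)).card < F.card :=
                Finset.card_lt_card ((Finset.ssubset_iff_of_subset hFsub).mpr ⟨b, hbF, hnotmem⟩)
              omega
          · obtain ⟨t, htm, hteq⟩ := Finset.mem_image.mp hx
            obtain ⟨htT, hcond⟩ := Finset.mem_filter.mp htm
            obtain ⟨hslack, hdpos⟩ := hcond
            have hsne : (∑ b ∈ St t, dd b) ≠ 0 := ne_of_gt hdpos
            have heq1 : ∑ b ∈ St t, (z b + ε * dd b) = (Δ:ℝ) := by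
              rw [hsums, ← hteq]
              field_simp
              ring
            have hnotmem : t ∉ T.filter (fun t => ∑ b ∈ St t, (z b + ε * dd b) < (Δ:ℝ)) := by
              intro hmem
              have hlt := (Finset.mem_filter.mp hmem).2
              rw [heq1] at hlt
              exact lt_irrefl _ hlt
            have htmem : t ∈ T.filter (fun t => ∑ b ∈ St t, z b < (Δ:ℝ)) :=
              Finset.mem_filter.mpr ⟨htT, hslack⟩
            have : (T.filter (fun t => ∑ b ∈ St t, (z b + ε * dd b) < (Δ:ℝ))).card
                < (T.filter (fun t => ∑ b ∈ St t, z b < (Δ:ℝ))).card :=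
              Finset.card_lt_card ((Finset.ssubset_iff_of_subset hSsub).mpr ⟨t, htmem, hnotmem⟩)
            omega
        exact ⟨ε, hεpos, fun b => (hbound b).1, fun b => (hbound b).2, hcaps, hstrict⟩
      -- apply the step to d and -d
      have hndsupp : ∀ b, b ∉ F → (-d) b = 0 := by
        intro b hb; simp [hsupp b hb]
      have hndtight : ∀ t ∈ T, (∑ b ∈ St t, z b = (Δ:ℝ)) → ∑ b ∈ St t, (-d) b = 0 := by
        intro t ht heq
        simp only [Pi.neg_apply]
        rw [Finset.sum_neg_distrib, hdcut t ht heq]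
        ring
      obtain ⟨ε₁, hε₁, hlo₁, hhi₁, hcap₁, hdec₁⟩ := step d hd0 hsupp hdcut
      obtain ⟨ε₂, hε₂, hlo₂, hhi₂, hcap₂, hdec₂⟩ := step (-d) (neg_ne_zero.mpr hd0) hndsupp hndtight
      have hmem₁ := IH (fun b => z b + ε₁ * d b)
        (by show (univ.filter (fun b => z b + ε₁ * d b ≠ 0 ∧ z b + ε₁ * d b ≠ 1)).card
              + (T.filter (fun t => ∑ b ∈ St t, (z b + ε₁ * d b) < (Δ:ℝ))).card ≤ n
            omega)
        hlo₁ hhi₁ hcap₁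
      have hmem₂ := IH (fun b => z b + ε₂ * (-d) b)
        (by show (univ.filter (fun b => z b + ε₂ * (-d) b ≠ 0 ∧ z b + ε₂ * (-d) b ≠ 1)).card
              + (T.filter (fun t => ∑ b ∈ St t, (z b + ε₂ * (-d) b) < (Δ:ℝ))).card ≤ n
            omega)
        hlo₂ hhi₂ hcap₂
      have hsumpos : (0:ℝ) < ε₁ + ε₂ := by linarith
      have hcomb : (ε₂ / (ε₁ + ε₂)) • (fun b => z b + ε₁ * d b)
          + (ε₁ / (ε₁ + ε₂)) • (fun b => z b + ε₂ * (-d) b) = z := by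
        funext b
        simp only [Pi.add_apply, Pi.smul_apply, smul_eq_mul, Pi.neg_apply]
        field_simp
        ring
      rw [← hcomb]
      exact convex_convexHull ℝ _ hmem₁ hmem₂
        (div_nonneg hε₂.le hsumpos.le) (div_nonneg hε₁.le hsumpos.le)
        (by rw [← add_div, add_comm ε₂ ε₁, div_self (ne_of_gt hsumpos)])
    · -- z is integral
      refine subset_convexHull ℝ _ ⟨fun b => ?_, hcap⟩
      by_contra hb
      push_neg at hb
      exact hFne ⟨b, Finset.mem_filter.mpr ⟨Finset.mem_univ b, hb⟩⟩

/-- **Proposition 1 (Kober, Schiffer, Sorgatz, Weltge).**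
Let `B` be a finite set of breaks, each break `b` being the closed real interval
`[s b, e b]` with `s b ≤ e b`, let `T` be a finite set of real time points, and let
`Δ ≥ 1` be an integer. If `(ȳ, x̄)` satisfies `ȳ_b ≥ 0`, `0 ≤ x̄ ≤ 1`,
`∑_{b : t ∈ I_b} ȳ_b ≤ Δ·x̄` for all `t ∈ T`, and `ȳ_b ≤ x̄` for all `b`, then
`(ȳ, x̄)` lies in the convex hull of the binary vectors `(y', x')` satisfying
`∑_{b : t ∈ I_b} y'_b ≤ Δ·x'` for all `t ∈ T`. -/
theorem capacity_cuts_integral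
    {B : Type*} [Fintype B] (s e : B → ℝ) (hse : ∀ b, s b ≤ e b)
    (T : Finset ℝ) (Δ : ℤ) (hΔ : 1 ≤ Δ)
    (ybar : B → ℝ) (xbar : ℝ)
    (hy0 : ∀ b, 0 ≤ ybar b) (hx0 : 0 ≤ xbar) (hx1 : xbar ≤ 1)
    (hcap : ∀ t ∈ T,
      ∑ b ∈ univ.filter (fun b => s b ≤ t ∧ t ≤ e b), ybar b ≤ (Δ : ℝ) * xbar)
    (hyx : ∀ b, ybar b ≤ xbar) :
    (ybar, xbar) ∈ convexHull ℝ
      {p : (B → ℝ) × ℝ | (∀ b, p.1 b = 0 ∨ p.1 b = 1) ∧ (p.2 = 0 ∨ p.2 = 1) ∧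
        ∀ t ∈ T, ∑ b ∈ univ.filter (fun b => s b ≤ t ∧ t ≤ e b), p.1 b ≤ (Δ : ℝ) * p.2} := by
  classical
  set S := {p : (B → ℝ) × ℝ | (∀ b, p.1 b = 0 ∨ p.1 b = 1) ∧ (p.2 = 0 ∨ p.2 = 1) ∧
      ∀ t ∈ T, ∑ b ∈ univ.filter (fun b => s b ≤ t ∧ t ≤ e b), p.1 b ≤ (Δ : ℝ) * p.2} with hSdef
  have h00 : ((fun _ => (0:ℝ)), (0:ℝ)) ∈ S := by
    refine ⟨fun b => Or.inl rfl, Or.inl rfl, fun t ht => ?_⟩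
    simp
  by_cases hx : xbar = 0
  · have hy : ybar = fun _ => 0 := funext (fun b => le_antisymm (hx ▸ hyx b) (hy0 b))
    rw [hx, hy]
    exact subset_convexHull ℝ S h00
  · have hxpos : 0 < xbar := lt_of_le_of_ne hx0 (Ne.symm hx)
    set z : B → ℝ := fun b => ybar b / xbar with hz
    have hz0 : ∀ b, 0 ≤ z b := fun b => div_nonneg (hy0 b) hx0
    have hz1 : ∀ b, z b ≤ 1 := fun b => (div_le_one hxpos).mpr (hyx b)
    have hzcap : ∀ t ∈ T, ∑ b ∈ univ.filter (fun b => s b ≤ t ∧ t ≤ e b), z b ≤ (Δ:ℝ) := by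
      intro t ht
      rw [hz]
      rw [← Finset.sum_div, div_le_iff₀ hxpos]
      exact hcap t ht
    have hzmem := core s e T Δ _ z le_rfl hz0 hz1 hzcap
    -- lift to the product space via an affine map
    let L : (B → ℝ) →ᵃ[ℝ] ((B → ℝ) × ℝ) :=
      { toFun := fun w => (w, 1)
        linear := LinearMap.inl ℝ (B → ℝ) ℝ
        map_vadd' := by
          intro p v
          apply Prod.ext <;> simp }
    have himg : L '' {w : B → ℝ | (∀ b, w b = 0 ∨ w b = 1) ∧
        ∀ t ∈ T, ∑ b ∈ univ.filter (fun b => s b ≤ t ∧ t ≤ e b), w b ≤ (Δ:ℝ)} ⊆ S := by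
      rintro p ⟨w, hw, rfl⟩
      refine ⟨hw.1, Or.inr rfl, fun t ht => ?_⟩
      show ∑ b ∈ univ.filter (fun b => s b ≤ t ∧ t ≤ e b), w b ≤ (Δ:ℝ) * 1
      rw [mul_one]
      exact hw.2 t ht
    have hz1S : ((z, 1) : (B → ℝ) × ℝ) ∈ convexHull ℝ S := by
      have h1 : L z ∈ L '' (convexHull ℝ {w : B → ℝ | (∀ b, w b = 0 ∨ w b = 1) ∧
          ∀ t ∈ T, ∑ b ∈ univ.filter (fun b => s b ≤ t ∧ t ≤ e b), w b ≤ (Δ:ℝ)}) :=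
        ⟨z, hzmem, rfl⟩
      rw [AffineMap.image_convexHull] at h1
      exact convexHull_mono himg h1
    have h0S : ((fun _ => (0:ℝ), (0:ℝ)) : (B → ℝ) × ℝ) ∈ convexHull ℝ S :=
      subset_convexHull ℝ S h00
    have hconv := convex_convexHull ℝ S h0S hz1S
      (by linarith : (0:ℝ) ≤ 1 - xbar) hx0 (by ring)
    have heq : (1 - xbar) • ((fun _ => (0:ℝ), (0:ℝ)) : (B → ℝ) × ℝ)
        + xbar • ((z, 1) : (B → ℝ) × ℝ) = (ybar, xbar) := by
      apply Prod.ext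
      · funext b
        simp only [Prod.smul_fst, Prod.fst_add, Pi.add_apply, Pi.smul_apply, smul_eq_mul, hz]
        field_simp
        ring
      · simp only [Prod.smul_snd, Prod.snd_add, smul_eq_mul]
        ring
    rw [← heq]
    exact hconv
end

section
/- Let B be a finite set of breaks, where each break b ∈ B is given as a closed real interval I_b, let T be a finite set of real time points, and let D be a finite set of positive integers (the possible numbers of ports of a charging station at a fixed location and mode). Let x ∈ {0,1}^D with Σ_{Δ ∈ D} x_Δ ≤ 1 and y ∈ {0,1}^B satisfy the capacity constraints Σ_{b ∈ B : t ∈ I_b} y_b ≤ Σ_{Δ ∈ D} Δ·x_Δ for all t ∈ T. Then for every t* ∈ T and every subset S ⊆ {b ∈ B : t* ∈ I_b}, the generalized capacity cut Σ_{b ∈ S} y_b ≤ Σ_{Δ ∈ D} min(|S|, Δ)·x_Δ holds. -/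
open Finset

/-- Let `B` be a finite set of breaks, each break `b` being the closed real interval
`I_b = [s b, e b]`, let `T` be a finite set of real time points, and let `D` be a
finite set of positive integers (possible numbers of ports). If `x ∈ {0,1}^D` with
`∑_{Δ ∈ D} x_Δ ≤ 1` and `y ∈ {0,1}^B` satisfy the capacity constraints
`∑_{b : t ∈ I_b} y_b ≤ ∑_{Δ ∈ D} Δ·x_Δ` for all `t ∈ T`, then for every `t* ∈ T`
and every `S ⊆ {b : t* ∈ I_b}` the generalized capacity cut
`∑_{b ∈ S} y_b ≤ ∑_{Δ ∈ D} min(|S|, Δ)·x_Δ` holds. -/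
theorem generalized_capacity_cuts
    {B : Type*} [Fintype B] [DecidableEq B] (s e : B → ℝ)
    (T : Finset ℝ) (D : Finset ℕ) (hD : ∀ Δ ∈ D, 1 ≤ Δ)
    (x : ℕ → ℝ) (hx : ∀ Δ ∈ D, x Δ = 0 ∨ x Δ = 1) (hx1 : ∑ Δ ∈ D, x Δ ≤ 1)
    (y : B → ℝ) (hy : ∀ b, y b = 0 ∨ y b = 1)
    (hcap : ∀ t ∈ T,
      ∑ b ∈ univ.filter (fun b => s b ≤ t ∧ t ≤ e b), y b ≤ ∑ Δ ∈ D, (Δ : ℝ) * x Δ) :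
    ∀ tstar ∈ T, ∀ S ⊆ univ.filter (fun b => s b ≤ tstar ∧ tstar ≤ e b),
      ∑ b ∈ S, y b ≤ ∑ Δ ∈ D, (min S.card Δ : ℝ) * x Δ := by

  intro tstar ht S hS
  have hy0 : ∀ b, 0 ≤ y b := fun b => by rcases hy b with h | h <;> simp [h]
  have hcapS : ∑ b ∈ S, y b ≤ ∑ Δ ∈ D, (Δ : ℝ) * x Δ :=
    (Finset.sum_le_sum_of_subset_of_nonneg hS (fun b _ _ => hy0 b)).trans (hcap tstar ht)
  have hcard : ∑ b ∈ S, y b ≤ (S.card : ℝ) := by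
    calc ∑ b ∈ S, y b ≤ ∑ _b ∈ S, (1:ℝ) :=
          Finset.sum_le_sum (fun b _ => by rcases hy b with h | h <;> simp [h])
      _ = S.card := by simp
  by_cases h0 : ∀ Δ ∈ D, x Δ = 0
  · have h1 : ∑ Δ ∈ D, (min S.card Δ : ℝ) * x Δ = 0 :=
      Finset.sum_eq_zero (fun Δ hΔ => by simp [h0 Δ hΔ])
    have h2 : ∑ Δ ∈ D, (Δ : ℝ) * x Δ = 0 :=
      Finset.sum_eq_zero (fun Δ hΔ => by simp [h0 Δ hΔ])
    rw [h1]; linarith [h2 ▸ hcapS]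
  · push_neg at h0
    obtain ⟨Δ0, hΔ0, hx0⟩ := h0
    have hx0' : x Δ0 = 1 := (hx Δ0 hΔ0).resolve_left hx0
    have hothers : ∀ Δ ∈ D, Δ ≠ Δ0 → x Δ = 0 := by
      intro Δ hΔ hne
      by_contra h
      have hx1' : x Δ = 1 := (hx Δ hΔ).resolve_left h
      have hpair : ({Δ, Δ0} : Finset ℕ) ⊆ D := by
        intro a ha; simp at ha; rcases ha with rfl | rfl <;> assumption
      have hxnn : ∀ a ∈ D, a ∉ ({Δ, Δ0} : Finset ℕ) → 0 ≤ x a := by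
        intro a ha _; rcases hx a ha with h' | h' <;> simp [h']
      have := Finset.sum_le_sum_of_subset_of_nonneg hpair hxnn
      rw [Finset.sum_pair hne, hx1', hx0'] at this
      linarith
    have hR : ∑ Δ ∈ D, (min S.card Δ : ℝ) * x Δ = (min S.card Δ0 : ℝ) := by
      rw [Finset.sum_eq_single_of_mem Δ0 hΔ0
        (fun Δ hΔ hne => by simp [hothers Δ hΔ hne]), hx0', mul_one]
    have hL : ∑ Δ ∈ D, (Δ : ℝ) * x Δ = (Δ0 : ℝ) := by
      rw [Finset.sum_eq_single_of_mem Δ0 hΔ0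
        (fun Δ hΔ hne => by simp [hothers Δ hΔ hne]), hx0', mul_one]
    rw [hR]
    rw [hL] at hcapS
    exact le_min hcard hcapS
end

section
/- Let B be a finite set of breaks, where each break b ∈ B is given as a closed real interval I_b = [s_b, e_b] with s_b ≤ e_b. Then for every real time point t such that the set {b ∈ B : t ∈ I_b} is nonempty, there exists a break b* ∈ B with t ∈ I_{b*} such that {b ∈ B : t ∈ I_b} ⊆ {b ∈ B : s_{b*} ∈ I_b}. Consequently, if y ∈ ℝ^B with y ≥ 0 satisfies Σ_{b ∈ B : s_{b'} ∈ I_b} y_b ≤ c for every break b' ∈ B (i.e., the capacity constraint is imposed at the start time of every break), then Σ_{b ∈ B : t ∈ I_b} y_b ≤ c holds for every real time point t, where c ≥ 0 is any fixed capacity. -/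
open Finset

/-- Let `B` be a finite set of breaks, each break `b` being the closed real interval
`I_b = [s b, e b]` with `s b ≤ e b`. Then: (1) for every real time point `t` such
that `{b : t ∈ I_b}` is nonempty, there exists a break `b*` with `t ∈ I_{b*}` and
`{b : t ∈ I_b} ⊆ {b : s_{b*} ∈ I_b}`; consequently, (2) if `y ≥ 0` satisfies the
capacity constraint `∑_{b : s_{b'} ∈ I_b} y_b ≤ c` at the start time of every break
`b'`, then `∑_{b : t ∈ I_b} y_b ≤ c` holds at every real time point `t`, for any
fixed capacity `c ≥ 0`. -/
theorem capacity_constraints_at_start_times_suffice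
    {B : Type*} [Fintype B] (s e : B → ℝ) (hse : ∀ b, s b ≤ e b) :
    (∀ t : ℝ, {b : B | s b ≤ t ∧ t ≤ e b}.Nonempty →
      ∃ bstar : B, (s bstar ≤ t ∧ t ≤ e bstar) ∧
        {b : B | s b ≤ t ∧ t ≤ e b} ⊆ {b : B | s b ≤ s bstar ∧ s bstar ≤ e b}) ∧
    (∀ c : ℝ, 0 ≤ c → ∀ y : B → ℝ, (∀ b, 0 ≤ y b) →
      (∀ b' : B, ∑ b ∈ univ.filter (fun b => s b ≤ s b' ∧ s b' ≤ e b), y b ≤ c) →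
      ∀ t : ℝ, ∑ b ∈ univ.filter (fun b => s b ≤ t ∧ t ≤ e b), y b ≤ c) := by
  have key : ∀ t : ℝ, {b : B | s b ≤ t ∧ t ≤ e b}.Nonempty →
      ∃ bstar : B, (s bstar ≤ t ∧ t ≤ e bstar) ∧
        {b : B | s b ≤ t ∧ t ≤ e b} ⊆ {b : B | s b ≤ s bstar ∧ s bstar ≤ e b} := by
    intro t ht
    obtain ⟨b0, hb0⟩ := ht
    -- choose bstar maximizing s over the finite set of breaks containing t
    have hne : (univ.filter (fun b : B => s b ≤ t ∧ t ≤ e b)).Nonempty :=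
      ⟨b0, by simp [hb0.1, hb0.2]⟩
    obtain ⟨bstar, hbmem, hbmax⟩ := exists_max_image _ s hne
    simp only [mem_filter, mem_univ, true_and] at hbmem
    refine ⟨bstar, hbmem, ?_⟩
    intro b hb
    simp only [Set.mem_setOf_eq] at hb ⊢
    have hmax : s b ≤ s bstar := hbmax b (by simp [hb.1, hb.2])
    exact ⟨hmax, le_trans hbmem.1 hb.2⟩
  refine ⟨key, ?_⟩
  intro c hc y hy hcap t
  by_cases hne : {b : B | s b ≤ t ∧ t ≤ e b}.Nonempty
  · obtain ⟨bstar, _, hsub⟩ := key t hne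
    calc ∑ b ∈ univ.filter (fun b => s b ≤ t ∧ t ≤ e b), y b
        ≤ ∑ b ∈ univ.filter (fun b => s b ≤ s bstar ∧ s bstar ≤ e b), y b := by
          apply sum_le_sum_of_subset_of_nonneg
          · intro b hb
            simp only [mem_filter, mem_univ, true_and] at hb ⊢
            exact hsub hb
          · intros; exact hy _
      _ ≤ c := hcap bstar
  · have : univ.filter (fun b : B => s b ≤ t ∧ t ≤ e b) = ∅ := by
      rw [filter_eq_empty_iff]
      intro b _ hb
      exact hne ⟨b, hb⟩
    rw [this, sum_empty]
    exact hc
end
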